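/- Let R be a subring of a ring T with the same identity, and let n be a positive integer. Then the rational closure of Mat_n(R) in Mat_n(T) equals Mat_n(R'), where R' is the rational closure of R in T. -/

import Mathlib

/-- The rational closure of a subset `R` of a ring `T`: all entries of inverses of square
matrices over `R` that are invertible over `T`. -/
def ratClosure {T : Type*} [Ring T] (R : Set T) : Set T :=
  {x | ∃ (n : ℕ) (A B : Matrix (Fin n) (Fin n) T),
    (∀ i j, A i j ∈ R) ∧ A * B = 1 ∧ B * A = 1 ∧ ∃ i j, x = B i j}

/-!
The rational closure of a subring `R` is again a subring: if `B`, `B'` are inverses of matrices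
`A`, `A'` over `R`, then for every `G` over `R` the block matrix `[[A, -G], [0, A']]` has inverse
`[[B, B G B'], [0, B']]`, and choosing `G` to be a matrix unit (resp. `A E + F A'` for matrix
units `E`, `F`) puts a product (resp. a sum) of entries of `B` and `B'` into an entry of `B G B'`.

An inverse of a matrix over `Mat_n(R)` is, after identifying `Mat_m(Mat_n(T))` with
`Mat_{m n}(T)`, an inverse of a matrix over `R`, so its entries have entries in the rational
closure of `R`. Conversely, scalar matrices with entries in the rational closure of `R` lie in the
rational closure of `Mat_n(R)`, and together with the matrix units over `R` they generate
`Mat_n` of the rational closure of `R` as a ring.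
-/

open Matrix

section RatClosure

variable {T : Type*} [Ring T]

lemma mem_ratClosure_of_mul_eq_one (R : Set T) {ι : Type*} [Fintype ι] [DecidableEq ι]
    {A B : Matrix ι ι T} (hA : ∀ i j, A i j ∈ R) (hAB : A * B = 1) (hBA : B * A = 1)
    (i j : ι) :
    B i j ∈ ratClosure R := by
  let e := Fintype.equivFin ι
  refine ⟨Fintype.card ι, A.submatrix e.symm e.symm, B.submatrix e.symm e.symm,
    fun p q => hA _ _, ?_, ?_, e i, e j, by simp⟩
  · rw [submatrix_mul_equiv, hAB, submatrix_one_equiv]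
  · rw [submatrix_mul_equiv, hBA, submatrix_one_equiv]

lemma mul_mul_mem_ratClosure (R : Subring T) {ι κ : Type*} [Fintype ι] [DecidableEq ι]
    [Fintype κ] [DecidableEq κ] {A B : Matrix ι ι T} {A' B' : Matrix κ κ T}
    {G : Matrix ι κ T} (hA : ∀ i j, A i j ∈ R) (hA' : ∀ i j, A' i j ∈ R)
    (hG : ∀ i j, G i j ∈ R)
    (hAB : A * B = 1) (hBA : B * A = 1) (hAB' : A' * B' = 1) (hBA' : B' * A' = 1)
    (i : ι) (j : κ) :
    (B * G * B') i j ∈ ratClosure (R : Set T) := by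
  have hmem : ∀ p q, fromBlocks A (-G) 0 A' p q ∈ R := by
    rintro (p | p) (q | q)
    exacts [hA p q, R.neg_mem (hG p q), R.zero_mem, hA' p q]
  have hright : fromBlocks A (-G) 0 A' * fromBlocks B (B * G * B') 0 B' = 1 := by
    rw [fromBlocks_multiply, ← fromBlocks_one]
    simp [← Matrix.mul_assoc, hAB, hAB']
  have hleft : fromBlocks B (B * G * B') 0 B' * fromBlocks A (-G) 0 A' = 1 := by
    rw [fromBlocks_multiply, ← fromBlocks_one]
    simp [Matrix.mul_assoc, hBA, hBA']
  simpa using mem_ratClosure_of_mul_eq_one _ hmem hright hleft (Sum.inl i) (Sum.inr j)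

lemma subset_ratClosure (R : Subring T) : (R : Set T) ⊆ ratClosure (R : Set T) := by
  intro x hx
  have hone : ∀ i j, (1 : Matrix Unit Unit T) i j ∈ R := fun _ _ => R.one_mem
  simpa using mul_mul_mem_ratClosure R (G := of fun _ _ => x) hone hone (fun _ _ => hx)
    (one_mul 1) (one_mul 1) (one_mul 1) (one_mul 1) () ()

lemma mul_mem_ratClosure (R : Subring T) {x y : T} (hx : x ∈ ratClosure (R : Set T))
    (hy : y ∈ ratClosure (R : Set T)) : x * y ∈ ratClosure (R : Set T) := by
  obtain ⟨k, A, B, hA, hAB, hBA, i, j, rfl⟩ := hx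
  obtain ⟨k', A', B', hA', hAB', hBA', i', j', rfl⟩ := hy
  have hG : ∀ p q, single j i' (1 : T) p q ∈ R := (single_mem_matrix R.zero_mem).2 R.one_mem
  have hentry : (B * single j i' (1 : T) * B') i j' = B i j * B' i' j' := by
    rw [Matrix.mul_assoc, mul_apply, Finset.sum_eq_single j] <;> simp +contextual
  simpa [hentry] using mul_mul_mem_ratClosure R hA hA' hG hAB hBA hAB' hBA' i j'

lemma add_mem_ratClosure (R : Subring T) {x y : T} (hx : x ∈ ratClosure (R : Set T))
    (hy : y ∈ ratClosure (R : Set T)) : x + y ∈ ratClosure (R : Set T) := by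
  obtain ⟨k, A, B, hA, hAB, hBA, i, j, rfl⟩ := hx
  obtain ⟨k', A', B', hA', hAB', hBA', i', j', rfl⟩ := hy
  set E := single i i' (1 : T)
  set F := single j j' (1 : T)
  have hE : ∀ p q, E p q ∈ R := (single_mem_matrix R.zero_mem).2 R.one_mem
  have hF : ∀ p q, F p q ∈ R := (single_mem_matrix R.zero_mem).2 R.one_mem
  have hG : ∀ p q, (A * E + F * A') p q ∈ R := fun p q => by
    rw [Matrix.add_apply, mul_apply, mul_apply]
    exact R.add_mem (R.sum_mem fun l _ => R.mul_mem (hA p l) (hE l q))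
      (R.sum_mem fun l _ => R.mul_mem (hF p l) (hA' l q))
  have hBGB : B * (A * E + F * A') * B' = E * B' + B * F := by
    simp only [Matrix.mul_add, Matrix.add_mul, ← Matrix.mul_assoc, hBA, Matrix.one_mul]
    simp only [Matrix.mul_assoc, hAB', Matrix.mul_one]
  simpa [hBGB, E, F, add_comm] using mul_mul_mem_ratClosure R hA hA' hG hAB hBA hAB' hBA' i j'

def ratClosureSubring (R : Subring T) : Subring T where
  carrier := ratClosure (R : Set T)
  zero_mem' := subset_ratClosure R R.zero_mem
  one_mem' := subset_ratClosure R R.one_mem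
  add_mem' := add_mem_ratClosure R
  mul_mem' := mul_mem_ratClosure R
  neg_mem' {x} hx := by
    simpa using mul_mem_ratClosure R hx (subset_ratClosure R (R.neg_mem R.one_mem))

lemma ratClosure_mapsTo {S : Type*} [Ring S] (f : T →+* S) {R : Set T} {R' : Set S}
    (hf : Set.MapsTo f R R') : Set.MapsTo f (ratClosure R) (ratClosure R') := by
  rintro _ ⟨k, A, B, hA, hAB, hBA, i, j, rfl⟩
  exact ⟨k, f.mapMatrix A, f.mapMatrix B, fun p q => hf (hA p q),
    by rw [← map_mul, hAB, map_one], by rw [← map_mul, hBA, map_one], i, j, rfl⟩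

lemma ratClosure_matrix_subset (R : Set T) (ι : Type*) [Fintype ι] [DecidableEq ι] :
    ratClosure (Set.matrix R : Set (Matrix ι ι T)) ⊆ (ratClosure R).matrix := by
  rintro _ ⟨m, A, B, hA, hAB, hBA, i, j, rfl⟩ a b
  let e := compRingEquiv (Fin m) ι T
  exact mem_ratClosure_of_mul_eq_one R (A := e A) (B := e B) (fun p q => hA p.1 q.1 p.2 q.2)
    (by rw [← map_mul, hAB, map_one]) (by rw [← map_mul, hBA, map_one]) (i, a) (j, b)

lemma matrix_ratClosure_subset (R : Subring T) (ι : Type*) [Fintype ι] [DecidableEq ι] :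
    (ratClosure (R : Set T)).matrix ⊆ ratClosure ((R : Set T).matrix : Set (Matrix ι ι T)) := by
  intro M hM
  let S : Subring (Matrix ι ι T) := ratClosureSubring R.matrix
  have hscalar : ∀ a b, scalar ι (M a b) ∈ S := fun a b =>
    ratClosure_mapsTo (scalar ι)
      (fun _ hx => (diagonal_mem_matrix_iff R.zero_mem).2 fun _ => hx) (hM a b)
  have hunit : ∀ a b, single a b (1 : T) ∈ S := fun a b =>
    subset_ratClosure (R.matrix : Subring (Matrix ι ι T))
      ((single_mem_matrix R.zero_mem).2 R.one_mem)
  change M ∈ S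
  rw [matrix_eq_sum_single M]
  refine sum_mem fun a _ => sum_mem fun b _ => ?_
  have hsingle : single a b (M a b) = scalar ι (M a b) * single a b 1 := by
    rw [scalar_apply, ← smul_eq_diagonal_mul, smul_single, smul_eq_mul, mul_one]
  rw [hsingle]
  exact mul_mem (hscalar a b) (hunit a b)

end RatClosure

theorem stmt_4_general {T : Type*} [Ring T] (R : Subring T) (n : ℕ) :
    ratClosure {M : Matrix (Fin n) (Fin n) T | ∀ i j, M i j ∈ (R : Set T)} =
      {M : Matrix (Fin n) (Fin n) T | ∀ i j, M i j ∈ ratClosure (R : Set T)} :=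
  (ratClosure_matrix_subset (R : Set T) (Fin n)).antisymm (matrix_ratClosure_subset R (Fin n))

/-- The rational closure of `Mat_n(R)` in `Mat_n(T)` is `Mat_n(R')`, where `R'` is
the rational closure of `R` in `T`. -/
theorem stmt_4 {T : Type*} [Ring T] (R : Subring T) (n : ℕ) (hn : 0 < n) :
    ratClosure {M : Matrix (Fin n) (Fin n) T | ∀ i j, M i j ∈ (R : Set T)} =
      {M : Matrix (Fin n) (Fin n) T | ∀ i j, M i j ∈ ratClosure (R : Set T)} :=
  stmt_4_general R n
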